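/- In a metric space, let S_{t−1} and S^A_{t−1} be the sets of servers matched by two processes before round t, and suppose s_t and s^A_t are matched together in a minimum-cost perfect matching between S \ S_{t−1} and S \ S^A_{t−1} in which all servers in S \ (S_{t−1} ∪ S^A_{t−1}) are matched to themselves. Then d(s_t, s^A_t) = dist(S_{t−1}, S^A_{t−1}) − dist(S_t, S^A_t), where S_t = S_{t−1} ∪ {s_t} and S^A_t = S^A_{t−1} ∪ {s^A_t}. -/

import Mathlib

/-!
Elements common to both sides of a matching problem cancel: matching `c` with itself costs
nothing, and conversely any matching of `c + A` with `c + B` can be uncrossed, by the triangle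
inequality, into a matching of `A` with `B` that is no more expensive. Adding `X` to both sides
of `(S - X, S - Y)` and `S - Y` to both sides of `(X, Y)` yields the same pair `(S, X + (S - Y))`,
so `dist(S \ X, S \ Y) = dist(X, Y)`. Applied before and after round `t`, this turns the
optimality hypothesis `dist(S \ X, S \ Y) = d(s, sA) + dist(S \ Xₜ, S \ Yₜ)` into the claim.
-/

/-- The minimum cost of a perfect matching between two equal-size multisets
in a metric space. -/
noncomputable def mdist {V : Type*} [MetricSpace V] (A B : Multiset V) : ℝ :=
  sInf {c : ℝ | ∃ l₁ l₂ : List V, (l₁ : Multiset V) = A ∧ (l₂ : Multiset V) = B ∧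
    c = (List.zipWith dist l₁ l₂).sum}

open Multiset

section

variable {V : Type*} [MetricSpace V]

noncomputable def matchingCost (m : Multiset (V × V)) : ℝ :=
  (m.map fun p => dist p.1 p.2).sum

lemma matchingCost_cons (p : V × V) (m : Multiset (V × V)) :
    matchingCost (p ::ₘ m) = dist p.1 p.2 + matchingCost m := by
  simp [matchingCost]

lemma matchingCost_nonneg (m : Multiset (V × V)) : 0 ≤ matchingCost m :=
  Multiset.sum_nonneg fun _ hx => by
    obtain ⟨p, -, rfl⟩ := Multiset.mem_map.1 hx
    exact dist_nonneg

/-- Costs of the matchings of `A` with `B`, a matching being a multiset of pairs. -/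
def matchingCosts (A B : Multiset V) : Set ℝ :=
  {c | ∃ m : Multiset (V × V), m.map Prod.fst = A ∧ m.map Prod.snd = B ∧ c = matchingCost m}

lemma bddBelow_matchingCosts (A B : Multiset V) : BddBelow (matchingCosts A B) :=
  ⟨0, by rintro c ⟨m, -, -, rfl⟩; exact matchingCost_nonneg m⟩

lemma zip_mem_matchingCosts {l₁ l₂ : List V} (h : l₁.length = l₂.length) :
    matchingCost (l₁.zip l₂ : Multiset (V × V)) ∈ matchingCosts (l₁ : Multiset V) l₂ :=
  ⟨l₁.zip l₂, by simp [List.map_fst_zip h.le], by simp [List.map_snd_zip h.ge], rfl⟩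

lemma matchingCosts_nonempty {A B : Multiset V} (h : card A = card B) :
    (matchingCosts A B).Nonempty := by
  induction A using Quotient.inductionOn
  induction B using Quotient.inductionOn
  exact ⟨_, zip_mem_matchingCosts (by simpa using h)⟩

/-- Without the cardinality hypothesis `zipWith` truncates, and `mdist` is the cost of a
cheapest partial matching. -/
lemma mdist_eq_sInf_matchingCosts {A B : Multiset V} (h : card A = card B) :
    mdist A B = sInf (matchingCosts A B) := by
  unfold mdist
  congr 1
  ext c
  constructor
  · rintro ⟨l₁, l₂, rfl, rfl, rfl⟩
    convert zip_mem_matchingCosts (V := V) (by simpa using h) using 1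
    simp [matchingCost, List.zip, List.map_zipWith]
  · rintro ⟨m, rfl, rfl, rfl⟩
    induction m using Quotient.inductionOn with | h l => ?_
    refine ⟨l.map Prod.fst, l.map Prod.snd, rfl, rfl, ?_⟩
    simp [matchingCost, List.zipWith_map, List.zipWith_self]

lemma mdist_comm (A B : Multiset V) : mdist A B = mdist B A := by
  unfold mdist
  congr 1
  ext c
  constructor <;> rintro ⟨l₁, l₂, rfl, rfl, rfl⟩ <;>
    exact ⟨l₂, l₁, rfl, rfl, by rw [List.zipWith_comm_of_comm dist_comm]⟩

lemma exists_matchingCost_le_of_cons {c : V} {A B : Multiset V} {m : Multiset (V × V)}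
    (hA : m.map Prod.fst = c ::ₘ A) (hB : m.map Prod.snd = c ::ₘ B) :
    ∃ m' : Multiset (V × V), m'.map Prod.fst = A ∧ m'.map Prod.snd = B ∧
      matchingCost m' ≤ matchingCost m := by
  obtain ⟨p, hp, hpc⟩ := Multiset.mem_map.1 (hA ▸ Multiset.mem_cons_self c A)
  obtain ⟨m₀, rfl⟩ := Multiset.exists_cons_of_mem hp
  rw [Multiset.map_cons, hpc, Multiset.cons_inj_right] at hA
  rw [Multiset.map_cons] at hB
  by_cases hpc' : p.2 = c
  · rw [hpc', Multiset.cons_inj_right] at hB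
    refine ⟨m₀, hA, hB, ?_⟩
    rw [matchingCost_cons, hpc, hpc', dist_self, zero_add]
  -- `p = (c, b)` and some `q = (a, c)`: replace both by `(a, b)`.
  obtain ⟨q, hq, hqc⟩ : ∃ q ∈ m₀, q.2 = c := by
    have hc : c ∈ p.2 ::ₘ m₀.map Prod.snd := hB ▸ Multiset.mem_cons_self c B
    simpa [Ne.symm hpc'] using hc
  obtain ⟨m₁, rfl⟩ := Multiset.exists_cons_of_mem hq
  rw [Multiset.map_cons] at hA
  rw [Multiset.map_cons, hqc, Multiset.cons_swap, Multiset.cons_inj_right] at hB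
  refine ⟨(q.1, p.2) ::ₘ m₁, by rw [Multiset.map_cons]; exact hA,
    by rw [Multiset.map_cons]; exact hB, ?_⟩
  simp only [matchingCost_cons, hpc, hqc]
  linarith [dist_triangle q.1 c p.2]

lemma mdist_cons_cons (c : V) {A B : Multiset V} (h : card A = card B) :
    mdist (c ::ₘ A) (c ::ₘ B) = mdist A B := by
  rw [mdist_eq_sInf_matchingCosts h, mdist_eq_sInf_matchingCosts (by simp [h])]
  apply le_antisymm
  · refine le_csInf (matchingCosts_nonempty h) ?_
    rintro _ ⟨m, rfl, rfl, rfl⟩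
    refine csInf_le (bddBelow_matchingCosts _ _) ⟨(c, c) ::ₘ m, by simp, by simp, ?_⟩
    simp [matchingCost_cons]
  · refine le_csInf (matchingCosts_nonempty (by simp [h])) ?_
    rintro _ ⟨m, hA, hB, rfl⟩
    obtain ⟨m', rfl, rfl, hle⟩ := exists_matchingCost_le_of_cons hA hB
    exact (csInf_le (bddBelow_matchingCosts _ _) ⟨m', rfl, rfl, rfl⟩).trans hle

lemma mdist_add_add (C : Multiset V) {A B : Multiset V} (h : card A = card B) :
    mdist (C + A) (C + B) = mdist A B := by
  induction C using Multiset.induction_on with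
  | empty => simp
  | cons c C ih => rw [Multiset.cons_add, Multiset.cons_add, mdist_cons_cons c (by simp [h]), ih]

lemma mdist_sub_sub [DecidableEq V] {S X Y : Multiset V} (hX : X ≤ S) (hY : Y ≤ S) (h : card X = card Y) :
    mdist (S - X) (S - Y) = mdist X Y := calc
  mdist (S - X) (S - Y) = mdist (X + (S - X)) (X + (S - Y)) :=
    (mdist_add_add X (by rw [card_sub hX, card_sub hY, h])).symm
  _ = mdist ((S - Y) + X) ((S - Y) + Y) := by
    rw [add_tsub_cancel_of_le hX, tsub_add_cancel_of_le hY, mdist_comm, add_comm]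
  _ = mdist X Y := mdist_add_add _ h

lemma mdist_finset_sdiff [DecidableEq V] {S X Y : Finset V} (hX : X ⊆ S) (hY : Y ⊆ S)
    (h : X.card = Y.card) : mdist (S \ X).val (S \ Y).val = mdist X.val Y.val := by
  rw [Finset.sdiff_val, Finset.sdiff_val]
  exact mdist_sub_sub (Finset.val_le_iff.2 hX) (Finset.val_le_iff.2 hY) h

end

/-- If `s` and `sA` are matched together in a minimum-cost perfect matching between
`S \ S_{t−1}` and `S \ S^A_{t−1}`, then
`d(s, sA) = dist(S_{t−1}, S^A_{t−1}) − dist(S_t, S^A_t)` where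
`S_t = S_{t−1} ∪ {s}` and `S^A_t = S^A_{t−1} ∪ {sA}`. -/
theorem stmt14 {V : Type*} [MetricSpace V] [DecidableEq V]
    (S X Y : Finset V) (hX : X ⊆ S) (hY : Y ⊆ S) (hcard : X.card = Y.card)
    (s sA : V) (hs : s ∈ S \ X) (hsA : sA ∈ S \ Y)
    (hmatch : mdist (S \ X).val (S \ Y).val =
      dist s sA + mdist ((S \ X).erase s).val ((S \ Y).erase sA).val) :
    dist s sA = mdist X.val Y.val - mdist (insert s X).val (insert sA Y).val := by
  rw [Finset.mem_sdiff] at hs hsA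
  have hcard' : (insert s X).card = (insert sA Y).card := by
    rw [Finset.card_insert_of_notMem hs.2, Finset.card_insert_of_notMem hsA.2, hcard]
  rw [← Finset.sdiff_insert, ← Finset.sdiff_insert, mdist_finset_sdiff hX hY hcard,
    mdist_finset_sdiff (Finset.insert_subset hs.1 hX) (Finset.insert_subset hsA.1 hY) hcard']
    at hmatch
  linarith
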